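/- Almost-sure absorption in finite Markov chains: let P be the transition function of a finite MC over finite nonempty state type S, let G ⊆ S, and let B = B_P(G) be the set of states with no path to G under P. Then for every state s, Prob_P(s, G ∪ B) = 1. -/

import Mathlib

open scoped Classical BigOperators

/-- `n`-step reachability probability `Pr_P^n(s, G)`. -/
noncomputable def Pr {S : Type*} [Fintype S] (P : S → S → ℝ) : ℕ → S → Set S → ℝ
  | 0, s, G => if s ∈ G then 1 else 0
  | n + 1, s, G => if s ∈ G then 1 else ∑ t, P s t * Pr P n t G

/-- Reachability probability `Prob_P(s, G) = ⨆ n, Pr_P^n(s, G)`. -/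
noncomputable def Prob {S : Type*} [Fintype S] (P : S → S → ℝ) (s : S) (G : Set S) : ℝ :=
  ⨆ n : ℕ, Pr P n s G

/-- `C`-restriction of `P`: states outside `C` are made absorbing. -/
noncomputable def restrictMC {S : Type*} (C : Set S) (P : S → S → ℝ) (s t : S) : ℝ :=
  if s ∈ C then P s t else (if t = s then 1 else 0)

/-- `n`-step probability of reaching `B` while avoiding `G`. -/
noncomputable def APr {S : Type*} [Fintype S] (P : S → S → ℝ) : ℕ → S → Set S → Set S → ℝ
  | 0, s, B, _ => if s ∈ B then 1 else 0
  | n + 1, s, B, G => if s ∈ B then 1 else if s ∈ G then 0 else ∑ t, P s t * APr P n t B G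

/-- `AProb_P(s, B, G) = ⨆ n, APr_P^n(s, B, G)`. -/
noncomputable def AProb {S : Type*} [Fintype S] (P : S → S → ℝ) (s : S) (B G : Set S) : ℝ :=
  ⨆ n : ℕ, APr P n s B G

/-- `s` has a path to `G` under `P`. -/
def HasPathTo {S : Type*} (P : S → S → ℝ) (s : S) (G : Set S) : Prop :=
  ∃ (m : ℕ) (u : ℕ → S), u 0 = s ∧ (∀ i < m, 0 < P (u i) (u (i + 1))) ∧ u m ∈ G

/-- `B_P(G)`: the set of states with no path to `G` under `P`. -/
def BSet {S : Type*} (P : S → S → ℝ) (G : Set S) : Set S :=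
  {s | ¬ HasPathTo P s G}

/-- Transition function `P_r` of the instantiated MC `D_r` of a family `𝔓`. -/
noncomputable def Pinst {S K : Type*} [Fintype K] (𝔓 : S → K → ℝ) (r : K → S) (s t : S) : ℝ :=
  ∑ k, if r k = t then 𝔓 s k else 0

/-- Parameter `k` occurs at some state of `C`. -/
def OccursIn {S K : Type*} (𝔓 : S → K → ℝ) (C : Set S) (k : K) : Prop :=
  ∃ s ∈ C, 0 < 𝔓 s k

/-- `u` is reachable from `s0` under `P`. -/
def ReachableFrom {S : Type*} (P : S → S → ℝ) (s0 u : S) : Prop :=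
  ∃ (m : ℕ) (v : ℕ → S), v 0 = s0 ∧ (∀ i < m, 0 < P (v i) (v (i + 1))) ∧ v m = u

/-!
Write `T = G ∪ B_P(G)`; every state has a path to `T`. The limit `p u = Prob_P(u, T)` equals `1`
on `T` and is `P`-harmonic off `T`. If its minimum `c` were below `1`, a minimizer would lie
outside `T`, and harmonicity forces every successor of a minimizer to be a minimizer as well.
Following a path from a minimizer to `T` then gives a state of `T` with `p = c < 1`, which is
absurd.
-/

lemma hasPathTo_union_BSet {S : Type*} (P : S → S → ℝ) (G : Set S) (s : S) :
    HasPathTo P s (G ∪ BSet P G) := by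
  by_cases hs : s ∈ BSet P G
  · exact ⟨0, fun _ => s, rfl, fun i hi => absurd hi (Nat.not_lt_zero i), Or.inr hs⟩
  · obtain ⟨m, w, hw0, hwpos, hwm⟩ := not_not.mp hs
    exact ⟨m, w, hw0, hwpos, Or.inl hwm⟩

section Reachability

variable {S : Type*} [Fintype S] {P : S → S → ℝ} {G : Set S}

lemma Pr_of_mem (n : ℕ) {s : S} (hs : s ∈ G) : Pr P n s G = 1 := by
  cases n <;> simp [Pr, hs]

lemma Pr_succ_of_notMem (n : ℕ) {s : S} (hs : s ∉ G) :
    Pr P (n + 1) s G = ∑ t, P s t * Pr P n t G := by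
  simp [Pr, hs]

lemma Pr_nonneg (hP0 : ∀ s t, 0 ≤ P s t) (n : ℕ) (s : S) : 0 ≤ Pr P n s G := by
  induction n generalizing s with
  | zero => unfold Pr; split_ifs <;> norm_num
  | succ n ih =>
    by_cases hs : s ∈ G
    · simp [Pr_of_mem _ hs]
    · rw [Pr_succ_of_notMem n hs]
      exact Finset.sum_nonneg fun t _ => mul_nonneg (hP0 s t) (ih t)

lemma Pr_le_one (hP0 : ∀ s t, 0 ≤ P s t) (hP1 : ∀ s, ∑ t, P s t = 1) (n : ℕ) (s : S) :
    Pr P n s G ≤ 1 := by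
  induction n generalizing s with
  | zero => unfold Pr; split_ifs <;> norm_num
  | succ n ih =>
    by_cases hs : s ∈ G
    · simp [Pr_of_mem _ hs]
    · rw [Pr_succ_of_notMem n hs]
      calc ∑ t, P s t * Pr P n t G ≤ ∑ t, P s t :=
            Finset.sum_le_sum fun t _ => mul_le_of_le_one_right (hP0 s t) (ih t)
        _ = 1 := hP1 s

lemma Pr_monotone (hP0 : ∀ s t, 0 ≤ P s t) (s : S) : Monotone (fun n => Pr P n s G) := by
  refine monotone_nat_of_le_succ fun n => ?_
  induction n generalizing s with
  | zero =>
    by_cases hs : s ∈ G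
    · simp [Pr_of_mem _ hs]
    · rw [Pr_succ_of_notMem 0 hs, show Pr P 0 s G = 0 by simp [Pr, hs]]
      exact Finset.sum_nonneg fun t _ => mul_nonneg (hP0 s t) (Pr_nonneg hP0 0 t)
  | succ n ih =>
    by_cases hs : s ∈ G
    · simp [Pr_of_mem _ hs]
    · rw [Pr_succ_of_notMem _ hs, Pr_succ_of_notMem _ hs]
      exact Finset.sum_le_sum fun t _ => mul_le_mul_of_nonneg_left (ih t) (hP0 s t)

lemma tendsto_Pr_Prob (hP0 : ∀ s t, 0 ≤ P s t) (hP1 : ∀ s, ∑ t, P s t = 1) (s : S) :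
    Filter.Tendsto (fun n => Pr P n s G) Filter.atTop (nhds (Prob P s G)) :=
  tendsto_atTop_ciSup (Pr_monotone hP0 s)
    ⟨1, by rintro _ ⟨n, rfl⟩; exact Pr_le_one hP0 hP1 n s⟩

lemma Prob_le_one (hP0 : ∀ s t, 0 ≤ P s t) (hP1 : ∀ s, ∑ t, P s t = 1) (s : S) :
    Prob P s G ≤ 1 :=
  ciSup_le fun n => Pr_le_one hP0 hP1 n s

lemma Prob_of_mem {s : S} (hs : s ∈ G) : Prob P s G = 1 := by
  simp [Prob, Pr_of_mem _ hs]

lemma Prob_eq_sum_of_notMem (hP0 : ∀ s t, 0 ≤ P s t) (hP1 : ∀ s, ∑ t, P s t = 1) {s : S}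
    (hs : s ∉ G) : Prob P s G = ∑ t, P s t * Prob P t G := by
  refine tendsto_nhds_unique ((Filter.tendsto_add_atTop_iff_nat 1).2 (tendsto_Pr_Prob hP0 hP1 s)) ?_
  simp only [Pr_succ_of_notMem _ hs]
  exact tendsto_finsetSum _ fun t _ => (tendsto_Pr_Prob hP0 hP1 t).const_mul _

lemma eq_of_harmonic_of_forall_le (hP0 : ∀ s t, 0 ≤ P s t) (hP1 : ∀ s, ∑ t, P s t = 1)
    {p : S → ℝ} {c : ℝ} (hc : ∀ t, c ≤ p t) {s : S} (hs : p s = ∑ t, P s t * p t)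
    (hsc : p s = c) {t : S} (hst : 0 < P s t) : p t = c := by
  have hsum : ∑ u, P s u * (p u - c) = 0 := by
    simp only [mul_sub, Finset.sum_sub_distrib, ← Finset.sum_mul, hP1 s, ← hs, hsc]
    ring
  have hterm := (Finset.sum_eq_zero_iff_of_nonneg fun u _ =>
    mul_nonneg (hP0 s u) (sub_nonneg.2 (hc u))).1 hsum t (Finset.mem_univ t)
  have := (mul_eq_zero.1 hterm).resolve_left hst.ne'
  linarith

lemma Prob_eq_one_of_forall_hasPathTo (hP0 : ∀ s t, 0 ≤ P s t) (hP1 : ∀ s, ∑ t, P s t = 1)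
    (hpath : ∀ u, HasPathTo P u G) (s : S) : Prob P s G = 1 := by
  have : Nonempty S := ⟨s⟩
  obtain ⟨u₀, hu₀⟩ := Finite.exists_min fun u => Prob P u G
  set c := Prob P u₀ G
  suffices hc : 1 ≤ c from le_antisymm (Prob_le_one hP0 hP1 s) (hc.trans (hu₀ s))
  by_contra! hc
  have hnotMem : ∀ u, Prob P u G = c → u ∉ G := fun u hu huG => by
    rw [Prob_of_mem huG] at hu; linarith
  obtain ⟨m, w, hw0, hwpos, hwm⟩ := hpath u₀
  have hmin : ∀ i ≤ m, Prob P (w i) G = c := by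
    intro i
    induction i with
    | zero => intro _; rw [hw0]
    | succ i ih =>
      intro hi
      have hwi := ih (by omega)
      exact eq_of_harmonic_of_forall_le hP0 hP1 hu₀
        (Prob_eq_sum_of_notMem hP0 hP1 (hnotMem _ hwi)) hwi (hwpos i (by omega))
  exact hnotMem _ (hmin m le_rfl) hwm

end Reachability

theorem stmt_6_general {S : Type*} [Fintype S] (P : S → S → ℝ)
    (hP0 : ∀ s t, 0 ≤ P s t) (hP1 : ∀ s, ∑ t, P s t = 1)
    (G : Set S) (s : S) :
    Prob P s (G ∪ BSet P G) = 1 :=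
  Prob_eq_one_of_forall_hasPathTo hP0 hP1 (hasPathTo_union_BSet P G) s

/-- almost-sure absorption: `G ∪ B_P(G)` is reached with probability 1. -/
theorem stmt_6 {S : Type*} [Fintype S] [Nonempty S] (P : S → S → ℝ)
    (hP0 : ∀ s t, 0 ≤ P s t) (hP1 : ∀ s, ∑ t, P s t = 1)
    (G : Set S) (s : S) :
    Prob P s (G ∪ BSet P G) = 1 :=
  stmt_6_general P hP0 hP1 G s
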